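/- arXiv:0809.1091 — 4 statements merged into one kernel-verified Lean document; each statement's English description precedes it below -/
import Mathlib

section
/- Let X be a T1 space with the direct limit topology of an increasing sequence of closed subspaces X₁ ⊆ X₂ ⊆ ⋯, and let K be a compact topological space. Then the natural map colimₙ C(K, Xₙ) → C(K, X) on sets of continuous maps is a bijection. -/
/-- The canonical map from the disjoint union of the `C(K, Xₙ)` to `C(K, X)`,
given by composing with the inclusion `Xₙ ⊆ X`. -/
def stageToMap {X : Type*} [TopologicalSpace X] (F : ℕ → Set X) {K : Type*}
    [TopologicalSpace K] (p : Σ n : ℕ, C(K, F n)) : C(K, X) :=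
  ⟨fun k => (p.2 k : X), continuous_subtype_val.comp p.2.continuous⟩

/-!
A compact set `S` not contained in any stage yields points `x n ∈ S \ Xₙ`. Every subset of
`{x n}` meets each stage in a finite set, so it is closed for the direct limit topology. Hence
the sets `X \ ({x n} \ Xₘ)` form an increasing open cover of `S`; by compactness one of them
contains `S`, which is absurd since it misses `x m`. So continuous images of `K` land in a
stage, giving surjectivity; injectivity on the colimit is formal.
-/

open Set

theorem range_inter_subset_image_Iio {X : Type*} {F : ℕ → Set X} (hmono : Monotone F)
    {x : ℕ → X} (hx : ∀ k, x k ∉ F k) (n : ℕ) : range x ∩ F n ⊆ x '' Iio n := by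
  rintro _ ⟨⟨k, rfl⟩, hk⟩
  exact ⟨k, lt_of_not_ge fun hnk => hx k (hmono hnk hk), rfl⟩

section DirectLimit

variable {X : Type*} [TopologicalSpace X] [T1Space X] {F : ℕ → Set X}

theorem isClosed_of_forall_finite_inter
    (hlim : ∀ C : Set X, (∀ n, IsClosed ((Subtype.val ⁻¹' C : Set (F n)))) → IsClosed C)
    {A : Set X} (hA : ∀ n, (A ∩ F n).Finite) : IsClosed A := by
  refine hlim A fun n => Finite.isClosed ?_
  exact ((hA n).preimage Subtype.val_injective.injOn).subset fun y hy => ⟨hy, y.2⟩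

theorem IsCompact.exists_subset_of_directLimit (hmono : Monotone F)
    (hunion : (⋃ n, F n) = univ)
    (hlim : ∀ C : Set X, (∀ n, IsClosed ((Subtype.val ⁻¹' C : Set (F n)))) → IsClosed C)
    {S : Set X} (hS : IsCompact S) : ∃ n, S ⊆ F n := by
  by_contra! hS_escapes
  choose x hxS hxF using fun n => not_subset.mp (hS_escapes n)
  have hclosed (m : ℕ) : IsClosed (range x \ F m) :=
    isClosed_of_forall_finite_inter hlim fun n =>
      ((finite_Iio n).image x).subset
        ((inter_subset_inter_left _ sdiff_subset).trans
          (range_inter_subset_image_Iio hmono hxF n))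
  have hcover : S ⊆ ⋃ m, (range x \ F m)ᶜ := by
    intro y _
    obtain ⟨m, hm⟩ := mem_iUnion.mp (hunion.symm ▸ mem_univ y : y ∈ ⋃ n, F n)
    exact mem_iUnion.mpr ⟨m, fun hy => hy.2 hm⟩
  have hdirected : Directed (· ⊆ ·) fun m => (range x \ F m)ᶜ :=
    Monotone.directed_le fun _ _ hab =>
      compl_subset_compl.mpr (sdiff_subset_sdiff_right (hmono hab))
  obtain ⟨m, hm⟩ :=
    hS.elim_directed_cover _ (fun m => (hclosed m).isOpen_compl) hcover hdirected
  exact hm (hxS m) ⟨mem_range_self m, hxF m⟩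

end DirectLimit

section StageToMap

variable {X : Type*} [TopologicalSpace X] {F : ℕ → Set X} {K : Type*} [TopologicalSpace K]

theorem stageToMap_surjective (hrange : ∀ f : C(K, X), ∃ n, range f ⊆ F n) :
    Function.Surjective (stageToMap (K := K) F) := by
  intro f
  obtain ⟨n, hn⟩ := hrange f
  exact ⟨⟨n, ⟨fun k => ⟨f k, hn (mem_range_self k)⟩, f.continuous.subtype_mk _⟩⟩,
    rfl⟩

theorem stageToMap_eq_iff (hmono : Monotone F) (p q : Σ n : ℕ, C(K, F n)) :
    stageToMap F p = stageToMap F q ↔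
      ∃ (m : ℕ) (h1 : p.1 ≤ m) (h2 : q.1 ≤ m),
        ∀ k : K, (inclusion (hmono h1) (p.2 k) : F m) = inclusion (hmono h2) (q.2 k) := by
  constructor
  · intro hpq
    exact ⟨max p.1 q.1, le_max_left _ _, le_max_right _ _, fun k =>
      Subtype.ext (DFunLike.congr_fun hpq k)⟩
  · rintro ⟨m, h1, h2, h⟩
    ext k
    exact congrArg Subtype.val (h k)

end StageToMap

theorem colim_continuousMaps_bijection_general
    {X : Type*} [TopologicalSpace X] [T1Space X]
    (F : ℕ → Set X) (hmono : Monotone F) (hunion : (⋃ n, F n) = Set.univ)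
    (hlim : ∀ C : Set X, (∀ n, IsClosed ((Subtype.val ⁻¹' C : Set (F n)))) → IsClosed C)
    (K : Type*) [TopologicalSpace K] [CompactSpace K] :
    Function.Surjective (stageToMap (K := K) F) ∧
      ∀ p q : Σ n : ℕ, C(K, F n),
        stageToMap F p = stageToMap F q ↔
          ∃ (m : ℕ) (h1 : p.1 ≤ m) (h2 : q.1 ≤ m),
            ∀ k : K, (Set.inclusion (hmono h1) (p.2 k) : F m) =
              Set.inclusion (hmono h2) (q.2 k) :=
  ⟨stageToMap_surjective fun f =>
      (isCompact_range f.continuous).exists_subset_of_directLimit hmono hunion hlim,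
    stageToMap_eq_iff hmono⟩

/-- For a T1 space `X` with the direct limit topology of an increasing sequence of closed
subspaces `Xₙ`, and a compact space `K`, the natural map `colimₙ C(K, Xₙ) → C(K, X)` is a
bijection.  We express this by saying that the map from the disjoint union of the stages is
surjective, and that two stages have the same image iff they are identified in the colimit
(i.e. they agree after inclusion into a common later stage). -/
theorem colim_continuousMaps_bijection
    {X : Type*} [TopologicalSpace X] [T1Space X]
    (F : ℕ → Set X) (hmono : Monotone F) (hunion : (⋃ n, F n) = Set.univ)
    (hclosed : ∀ n, IsClosed (F n))
    (hlim : ∀ C : Set X, (∀ n, IsClosed ((Subtype.val ⁻¹' C : Set (F n)))) → IsClosed C)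
    (K : Type*) [TopologicalSpace K] [CompactSpace K] :
    Function.Surjective (stageToMap (K := K) F) ∧
      ∀ p q : Σ n : ℕ, C(K, F n),
        stageToMap F p = stageToMap F q ↔
          ∃ (m : ℕ) (h1 : p.1 ≤ m) (h2 : q.1 ≤ m),
            ∀ k : K, (Set.inclusion (hmono h1) (p.2 k) : F m) =
              Set.inclusion (hmono h2) (q.2 k) :=
  colim_continuousMaps_bijection_general F hmono hunion hlim K
end

section
/- Let V and W be finite-dimensional complex vector spaces with positively weighted linear ℂ×-actions, and let X ⊆ V, Y ⊆ W be nonempty closed ℂ×-invariant cones. Then (X × Y) \ {(0,0)} contains the join S(X) * S(Y) as a deformation retract, where S(X), S(Y) are the intersections with unit spheres for invariant Hermitian metrics. -/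
/-- The linear `ℂ×`-action on `ℂ^m` with (positive) weights `w`. -/
noncomputable def wAct {m : ℕ} (w : Fin m → ℕ) (t : ℂ) (v : EuclideanSpace ℂ (Fin m)) :
    EuclideanSpace ℂ (Fin m) := WithLp.toLp 2 (fun i => t ^ w i * v i)

/-!
For a nonzero `v`, the norm along the orbit `s ↦ s • v` of the weighted action restricted to
`s > 0` increases strictly from `0` to `∞`: all weights are `≥ 1`, so `‖(c s) • v‖ ≥ c ‖s • v‖`
for `c ≥ 1`. Hence the orbit meets the unit sphere of the max-norm on `V × W`, which is the join
`S(X) * S(Y)`, at a single parameter `σ(v)`, and `σ` is continuous. Sliding each point along its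
orbit from parameter `1` to `σ(v)` stays in the invariant cone `X × Y`, avoids `0`, and fixes
the join.
-/

open Set

theorem EuclideanSpace.norm_le_norm_of_forall_norm_apply_le {𝕜 ι : Type*} [RCLike 𝕜]
    [Fintype ι] {u v : EuclideanSpace 𝕜 ι} (h : ∀ i, ‖u i‖ ≤ ‖v i‖) : ‖u‖ ≤ ‖v‖ := by
  rw [EuclideanSpace.norm_eq, EuclideanSpace.norm_eq]
  gcongr with i
  exact h i

theorem StrictMonoOn.of_le_mul {f : ℝ → ℝ} (hpos : ∀ s, 0 < s → 0 < f s)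
    (hf : ∀ c, 1 ≤ c → ∀ s, c * f s ≤ f (c * s)) : StrictMonoOn f (Ioi 0) := by
  intro s (hs : 0 < s) s' _ hss'
  calc f s < s' / s * f s := lt_mul_left (hpos s hs) ((one_lt_div hs).2 hss')
    _ ≤ f (s' / s * s) := hf _ ((one_le_div hs).2 hss'.le) s
    _ = f s' := by rw [div_mul_cancel₀ _ hs.ne']

theorem exists_pos_eq_of_le_mul {f : ℝ → ℝ} (hcont : Continuous f) (h0 : f 0 = 0)
    (h1 : 0 < f 1) (hf : ∀ c, 1 ≤ c → ∀ s, c * f s ≤ f (c * s)) {a : ℝ} (ha : 0 < a) :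
    ∃ s, 0 < s ∧ f s = a := by
  set T := max 1 (a / f 1)
  have hT : a ≤ f T := calc
    a = a / f 1 * f 1 := (div_mul_cancel₀ _ h1.ne').symm
    _ ≤ T * f 1 := by gcongr; exact le_max_right _ _
    _ ≤ f T := by simpa using hf T (le_max_left _ _) 1
  obtain ⟨s, hs, hfs⟩ := intermediate_value_Icc (zero_le_one.trans (le_max_left 1 _))
    hcont.continuousOn ⟨h0.le.trans ha.le, hT⟩
  refine ⟨s, hs.1.lt_of_ne ?_, hfs⟩
  rintro rfl
  exact ha.ne' (h0 ▸ hfs).symm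

theorem continuous_of_strictMonoOn_of_apply_eq {Z : Type*} [TopologicalSpace Z]
    {F : Z → ℝ → ℝ} {σ : Z → ℝ} {c : ℝ} (hF : ∀ s, Continuous fun z => F z s)
    (hmono : ∀ z, StrictMonoOn (F z) (Ioi 0)) (hσ : ∀ z, 0 < σ z) (hFσ : ∀ z, F z (σ z) = c) :
    Continuous σ := by
  refine continuous_iff_continuousAt.2 fun z₀ => tendsto_order.2 ⟨fun a ha => ?_, fun b hb => ?_⟩
  · set a' := max a (σ z₀ / 2)
    have ha' : 0 < a' := lt_max_of_lt_right (half_pos (hσ z₀))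
    have hlt : F z₀ a' < c :=
      hFσ z₀ ▸ hmono z₀ ha' (hσ z₀) (max_lt ha (half_lt_self (hσ z₀)))
    filter_upwards [(hF a').continuousAt.eventually_lt continuousAt_const hlt] with z hz
    exact (le_max_left a _).trans_lt <| (hmono z).lt_iff_lt ha' (hσ z) |>.1 (hFσ z ▸ hz)
  · have hb0 : 0 < b := (hσ z₀).trans hb
    have hgt : c < F z₀ b := hFσ z₀ ▸ hmono z₀ (hσ z₀) hb0 hb
    filter_upwards [continuousAt_const.eventually_lt (hF b).continuousAt hgt] with z hz
    exact (hmono z).lt_iff_lt (hσ z) hb0 |>.1 (hFσ z ▸ hz)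

/-- The restriction to `ℝ` of a positively weighted action: weights `≥ 1` make `ρ c` expand norms
by at least the factor `c` for `c ≥ 1`. -/
structure IsPosWeightAction {E : Type*} [NormedAddCommGroup E] (ρ : ℝ → E → E) : Prop where
  continuous : Continuous fun p : ℝ × E => ρ p.1 p.2
  one_apply : ∀ v, ρ 1 v = v
  mul_apply : ∀ s t v, ρ (s * t) v = ρ s (ρ t v)
  zero_apply : ∀ v, ρ 0 v = 0
  mul_norm_le : ∀ c, 1 ≤ c → ∀ v, c * ‖v‖ ≤ ‖ρ c v‖

/-- For `v ≠ 0`, the unique `s > 0` with `‖ρ s v‖ = 1` (a junk value at `v = 0`). -/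
noncomputable def unitScale {E : Type*} [Norm E] (ρ : ℝ → E → E) (v : E) : ℝ :=
  Classical.epsilon fun s => 0 < s ∧ ‖ρ s v‖ = 1

namespace IsPosWeightAction

variable {E : Type*} [NormedAddCommGroup E] {ρ : ℝ → E → E}

theorem apply_ne_zero (hρ : IsPosWeightAction ρ) {s : ℝ} (hs : s ≠ 0) {v : E} (hv : v ≠ 0) :
    ρ s v ≠ 0 := by
  intro h
  apply hv
  rw [← hρ.one_apply v, ← inv_mul_cancel₀ hs, hρ.mul_apply, h, ← hρ.zero_apply 0,
    ← hρ.mul_apply, mul_zero]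

theorem mul_norm_apply_le (hρ : IsPosWeightAction ρ) {c : ℝ} (hc : 1 ≤ c) (s : ℝ) (v : E) :
    c * ‖ρ s v‖ ≤ ‖ρ (c * s) v‖ :=
  hρ.mul_apply c s v ▸ hρ.mul_norm_le c hc _

theorem prod {F : Type*} [NormedAddCommGroup F] {ρ' : ℝ → F → F} (hρ : IsPosWeightAction ρ)
    (hρ' : IsPosWeightAction ρ') :
    IsPosWeightAction fun s (z : E × F) => (ρ s z.1, ρ' s z.2) where
  continuous := by
    have := hρ.continuous; have := hρ'.continuous
    fun_prop
  one_apply z := by simp only [hρ.one_apply, hρ'.one_apply]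
  mul_apply s t z := by simp only [hρ.mul_apply, hρ'.mul_apply]
  zero_apply z := by simp only [hρ.zero_apply, hρ'.zero_apply, Prod.mk_zero_zero]
  mul_norm_le c hc z := by
    simp only [Prod.norm_def, mul_max_of_nonneg _ _ (zero_le_one.trans hc)]
    exact max_le_max (hρ.mul_norm_le c hc _) (hρ'.mul_norm_le c hc _)

theorem strictMonoOn_norm_apply (hρ : IsPosWeightAction ρ) {v : E} (hv : v ≠ 0) :
    StrictMonoOn (fun s => ‖ρ s v‖) (Ioi 0) :=
  .of_le_mul (fun _ hs => norm_pos_iff.2 (hρ.apply_ne_zero hs.ne' hv))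
    fun _ hc s => hρ.mul_norm_apply_le hc s v

theorem unitScale_spec (hρ : IsPosWeightAction ρ) {v : E} (hv : v ≠ 0) :
    0 < unitScale ρ v ∧ ‖ρ (unitScale ρ v) v‖ = 1 :=
  Classical.epsilon_spec <| exists_pos_eq_of_le_mul
    (hρ.continuous.comp (continuous_id.prodMk continuous_const)).norm
    (by simp [hρ.zero_apply])
    (norm_pos_iff.2 (hρ.apply_ne_zero one_ne_zero hv))
    (fun _ hc s => hρ.mul_norm_apply_le hc s v) one_pos

theorem unitScale_of_norm_eq_one (hρ : IsPosWeightAction ρ) {v : E} (hv : ‖v‖ = 1) :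
    unitScale ρ v = 1 := by
  have hv0 : v ≠ 0 := norm_ne_zero_iff.1 (hv.symm ▸ one_ne_zero)
  obtain ⟨hpos, hnorm⟩ := hρ.unitScale_spec hv0
  exact (hρ.strictMonoOn_norm_apply hv0).injOn hpos (mem_Ioi.2 one_pos)
    (by simp only [hnorm, hρ.one_apply, hv])

theorem continuousOn_unitScale (hρ : IsPosWeightAction ρ) :
    ContinuousOn (unitScale ρ) {0}ᶜ := by
  rw [continuousOn_iff_continuous_domRestrict]
  exact continuous_of_strictMonoOn_of_apply_eq (F := fun (v : ({0}ᶜ : Set E)) s => ‖ρ s v‖)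
    (fun s => (hρ.continuous.comp (continuous_const.prodMk continuous_subtype_val)).norm)
    (fun v => hρ.strictMonoOn_norm_apply v.2) (fun v => (hρ.unitScale_spec v.2).1)
    (fun v => (hρ.unitScale_spec v.2).2)

theorem exists_strongDeformationRetraction_unitSphere (hρ : IsPosWeightAction ρ) {K : Set E}
    (hK : ∀ s, 0 < s → ∀ v ∈ K, ρ s v ∈ K) :
    ∃ H : C(↥(K \ {0}) × unitInterval, ↥(K \ {0})),
      (∀ v, H (v, 0) = v) ∧ (∀ v, ‖(H (v, 1) : E)‖ = 1) ∧
      (∀ (v : ↥(K \ {0})) t, ‖(v : E)‖ = 1 → H (v, t) = v) := by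
  set σ : ↥(K \ {0}) → ℝ := fun v => unitScale ρ v
  have hσ : Continuous σ :=
    hρ.continuousOn_unitScale.comp_continuous continuous_subtype_val fun v => v.2.2
  have hσpos (v : ↥(K \ {0})) : 0 < σ v := (hρ.unitScale_spec v.2.2).1
  set c : ↥(K \ {0}) × unitInterval → ℝ := fun p => (1 - p.2) + p.2 * σ p.1
  have hc : Continuous c := by fun_prop
  have hcpos (p : ↥(K \ {0}) × unitInterval) : 0 < c p := by
    simpa using convex_Ioi (0 : ℝ) (mem_Ioi.2 one_pos) (mem_Ioi.2 (hσpos p.1))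
      (sub_nonneg.2 (unitInterval.le_one p.2)) (unitInterval.nonneg p.2) (by ring)
  have hc_one (p : ↥(K \ {0}) × unitInterval) (h : σ p.1 = 1) : c p = 1 := by
    simp only [c, h]; ring
  refine ⟨⟨fun p => ⟨ρ (c p) p.1, hK _ (hcpos p) _ p.1.2.1,
      hρ.apply_ne_zero (hcpos p).ne' p.1.2.2⟩,
    (hρ.continuous.comp (hc.prodMk (continuous_subtype_val.comp continuous_fst))).subtype_mk _⟩,
    fun v => ?_, fun v => ?_, fun v t hv => ?_⟩
  · apply Subtype.ext
    simp [c, hρ.one_apply]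
  · simpa [c] using (hρ.unitScale_spec v.2.2).2
  · apply Subtype.ext
    simp [hc_one (v, t) (hρ.unitScale_of_norm_eq_one hv), hρ.one_apply]

end IsPosWeightAction

theorem isPosWeightAction_wAct {m : ℕ} {w : Fin m → ℕ} (hw : ∀ i, 1 ≤ w i) :
    IsPosWeightAction fun s : ℝ => wAct w (s : ℂ) where
  continuous := (PiLp.continuous_toLp 2 _).comp <| continuous_pi fun i =>
    (Complex.continuous_ofReal.comp continuous_fst).pow _ |>.mul
      ((PiLp.continuous_apply 2 _ i).comp continuous_snd)
  one_apply v := by ext i; simp [wAct]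
  mul_apply s t v := by ext i; simp [wAct, mul_pow]; ring
  zero_apply v := by ext i; simp [wAct, zero_pow (Nat.one_le_iff_ne_zero.1 (hw i))]
  mul_norm_le c hc v := by
    have hc0 : 0 ≤ c := zero_le_one.trans hc
    calc c * ‖v‖ = ‖(c : ℂ) • v‖ := by rw [norm_smul, Complex.norm_real, Real.norm_of_nonneg hc0]
      _ ≤ ‖wAct w (c : ℂ) v‖ := by
        refine EuclideanSpace.norm_le_norm_of_forall_norm_apply_le fun i => ?_
        simp only [wAct, PiLp.smul_apply, PiLp.toLp_apply, norm_smul, norm_mul, norm_pow,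
          Complex.norm_real, Real.norm_of_nonneg hc0]
        gcongr
        exact le_self_pow₀ hc (Nat.one_le_iff_ne_zero.1 (hw i))

theorem join_deformation_retract_of_punctured_product_of_cones_general
    (m n : ℕ) (w : Fin m → ℕ) (w' : Fin n → ℕ) (hw : ∀ i, 1 ≤ w i) (hw' : ∀ i, 1 ≤ w' i)
    (X : Set (EuclideanSpace ℂ (Fin m))) (Y : Set (EuclideanSpace ℂ (Fin n)))
    (hXinv : ∀ t : ℂ, t ≠ 0 → ∀ v ∈ X, wAct w t v ∈ X)
    (hYinv : ∀ t : ℂ, t ≠ 0 → ∀ v ∈ Y, wAct w' t v ∈ Y) :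
    ∃ H : C((↥((X ×ˢ Y) \ {(0, 0)})) × unitInterval, ↥((X ×ˢ Y) \ {(0, 0)})),
      (∀ z, H (z, 0) = z) ∧
      (∀ z, max ‖(H (z, 1)).1.1‖ ‖(H (z, 1)).1.2‖ = 1) ∧
      (∀ (z : ↥((X ×ˢ Y) \ {(0, 0)})) (t : unitInterval),
        max ‖(z : EuclideanSpace ℂ (Fin m) × EuclideanSpace ℂ (Fin n)).1‖
          ‖(z : EuclideanSpace ℂ (Fin m) × EuclideanSpace ℂ (Fin n)).2‖ = 1 →
        H (z, t) = z) := by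
  have hρ := (isPosWeightAction_wAct hw).prod (isPosWeightAction_wAct hw')
  refine hρ.exists_strongDeformationRetraction_unitSphere fun s hs z hz => ?_
  have hs' : (s : ℂ) ≠ 0 := Complex.ofReal_ne_zero.2 hs.ne'
  exact ⟨hXinv _ hs' _ hz.1, hYinv _ hs' _ hz.2⟩

/-- Let `X ⊆ ℂ^m` and `Y ⊆ ℂ^n` be nonempty closed positively weighted cones.  Then
`(X × Y) \ {(0,0)}` contains the join `S(X) * S(Y)` as a (strong) deformation retract,
where the join is realized inside `X × Y` as the set of pairs `(x, y)` with
`max ‖x‖ ‖y‖ = 1` (which is `(D(X) × S(Y)) ∪ (S(X) × D(Y)) ≅ (CS(X) × S(Y)) ∪ (S(X) × CS(Y))`). -/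
theorem join_deformation_retract_of_punctured_product_of_cones
    (m n : ℕ) (w : Fin m → ℕ) (w' : Fin n → ℕ) (hw : ∀ i, 1 ≤ w i) (hw' : ∀ i, 1 ≤ w' i)
    (X : Set (EuclideanSpace ℂ (Fin m))) (Y : Set (EuclideanSpace ℂ (Fin n)))
    (hXne : X.Nonempty) (hYne : Y.Nonempty) (hXcl : IsClosed X) (hYcl : IsClosed Y)
    (hXinv : ∀ t : ℂ, t ≠ 0 → ∀ v ∈ X, wAct w t v ∈ X)
    (hYinv : ∀ t : ℂ, t ≠ 0 → ∀ v ∈ Y, wAct w' t v ∈ Y) :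
    ∃ H : C((↥((X ×ˢ Y) \ {(0, 0)})) × unitInterval, ↥((X ×ˢ Y) \ {(0, 0)})),
      (∀ z, H (z, 0) = z) ∧
      (∀ z, max ‖(H (z, 1)).1.1‖ ‖(H (z, 1)).1.2‖ = 1) ∧
      (∀ (z : ↥((X ×ˢ Y) \ {(0, 0)})) (t : unitInterval),
        max ‖(z : EuclideanSpace ℂ (Fin m) × EuclideanSpace ℂ (Fin n)).1‖
          ‖(z : EuclideanSpace ℂ (Fin m) × EuclideanSpace ℂ (Fin n)).2‖ = 1 →
        H (z, t) = z) :=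
  join_deformation_retract_of_punctured_product_of_cones_general m n w w' hw hw' X Y hXinv hYinv
end

section
/- Let X be a topological space with a continuous action of ℂ× (the nonzero complex numbers under multiplication), let A ⊆ X be a closed invariant subspace, and let W be an open neighborhood of A that deformation retracts onto A. Suppose A is strongly attractive: for every neighborhood W' of A and every x ∈ X there is a neighborhood U of x and s > 0 such that t · U ⊆ W' for all 0 < |t| ≤ s. Then for every compact space K, the inclusion induces a bijection [K, A] → [K, X] on homotopy classes; in particular the inclusion A → X is a weak homotopy equivalence. -/
open Topology ContinuousMap

/-- The map on generalized loops induced by a continuous map. -/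
def inducedGenLoop {A X : Type*} [TopologicalSpace A] [TopologicalSpace X]
    (N : Type*) (i : C(A, X)) (a : A) (g : GenLoop N A a) : GenLoop N X (i a) :=
  ⟨i.comp g.1, fun y hy => by simp [g.2 y hy]⟩

/-- The map on homotopy groups induced by a continuous map. -/
def inducedHomotopyGroupMap {A X : Type*} [TopologicalSpace A] [TopologicalSpace X]
    (N : Type*) (i : C(A, X)) (a : A) :
    HomotopyGroup N A a → HomotopyGroup N X (i a) :=
  Quotient.map (inducedGenLoop N i a)
    (fun _ _ H => Nonempty.map (fun h => h.compContinuousMap i) H)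

/-- The map on path components induced by a continuous map. -/
def inducedZerothHomotopyMap {A X : Type*} [TopologicalSpace A] [TopologicalSpace X]
    (i : C(A, X)) : ZerothHomotopy A → ZerothHomotopy X :=
  Quotient.map i (fun _ _ ⟨p⟩ => ⟨p.map i.continuous⟩)

namespace SAIWE

open Set unitInterval

variable {X : Type*} [TopologicalSpace X]

/-- A positive real number, viewed as a unit of `ℂ`. -/
noncomputable def ru (r : ℝ) (hr : 0 < r) : ℂˣ :=
  Units.mk0 (r : ℂ) (by exact_mod_cast hr.ne')

theorem norm_ru (r : ℝ) (hr : 0 < r) : ‖((ru r hr : ℂˣ) : ℂ)‖ = r := by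
  simp [ru, abs_of_pos hr]

theorem ru_congr {r r' : ℝ} (hr : 0 < r) (hr' : 0 < r') (h : r = r') : ru r hr = ru r' hr' :=
  Units.ext (by simp [ru, h])

theorem continuous_ru {Y : Type*} [TopologicalSpace Y] {φ : Y → ℝ}
    (hφ : Continuous φ) (hφ0 : ∀ y, 0 < φ y) :
    Continuous fun y => ru (φ y) (hφ0 y) := by
  rw [Units.continuous_iff]
  have h : Continuous fun y => ((φ y : ℝ) : ℂ) := Complex.continuous_ofReal.comp hφ
  refine ⟨h, ?_⟩
  show Continuous fun y => ((φ y : ℂ))⁻¹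
  exact h.inv₀ fun y => Complex.ofReal_ne_zero.mpr (hφ0 y).ne'

theorem act_ru_eq_self (act : ℂˣ → X → X) (hone : ∀ x, act 1 x = x)
    {r : ℝ} (hr : 0 < r) (h1 : r = 1) (x : X) : act (ru r hr) x = x := by
  subst h1
  have : ru 1 hr = 1 := Units.ext (by simp [ru])
  rw [this]; exact hone x

theorem act_ru_congr (act : ℂˣ → X → X) {r r' : ℝ} (hr : 0 < r) (hr' : 0 < r')
    (h : r = r') (x : X) : act (ru r hr) x = act (ru r' hr') x := by
  rw [ru_congr hr hr' h]

theorem boundary_closed (n : ℕ) : IsClosed (Cube.boundary (Fin n)) := by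
  have : Cube.boundary (Fin n) =
      ⋃ i, ((fun y : Fin n → I => y i) ⁻¹' {0} ∪ (fun y : Fin n → I => y i) ⁻¹' {1}) := by
    ext y; simp [Cube.boundary]
  rw [this]
  exact isClosed_iUnion_of_finite fun i =>
    ((isClosed_singleton.preimage (continuous_apply i)).union
      (isClosed_singleton.preimage (continuous_apply i)))

/-- On a compact space, a single scaling factor works for all points. -/
theorem exists_scale (act : ℂˣ → X → X) (A W : Set X) (hWopen : IsOpen W) (hAW : A ⊆ W)
    (hattr : ∀ W' ∈ nhdsSet A, ∀ x : X, ∃ U ∈ nhds x, ∃ s > (0 : ℝ),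
      ∀ t : ℂˣ, ‖(t : ℂ)‖ ≤ s → ∀ u ∈ U, act t u ∈ W')
    {K : Type*} [TopologicalSpace K] [CompactSpace K] (f : C(K, X)) :
    ∃ s : ℝ, 0 < s ∧ s ≤ 1 ∧ ∀ t : ℂˣ, ‖(t : ℂ)‖ ≤ s → ∀ k, act t (f k) ∈ W := by
  have hWn : W ∈ nhdsSet A := hWopen.mem_nhdsSet.mpr hAW
  choose U hU sc hsc hprop using hattr W hWn
  obtain ⟨T, -, hT⟩ := isCompact_univ.elim_nhds_subcover (fun k : K => f ⁻¹' U (f k))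
    (fun k _ => f.continuous.continuousAt.preimage_mem_nhds (hU (f k)))
  have hSne : (insert (1:ℝ) (T.image fun k => sc (f k))).Nonempty :=
    ⟨1, Finset.mem_insert_self _ _⟩
  refine ⟨(insert (1:ℝ) (T.image fun k => sc (f k))).min' hSne, ?_,
    Finset.min'_le _ _ (Finset.mem_insert_self _ _), ?_⟩
  · have hmem := Finset.min'_mem _ hSne
    rcases Finset.mem_insert.1 hmem with h | h
    · rw [h]; exact one_pos
    · obtain ⟨k, -, hk⟩ := Finset.mem_image.1 h
      rw [← hk]; exact hsc (f k)
  · intro t ht k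
    have hk : k ∈ ⋃ k₀ ∈ T, f ⁻¹' U (f k₀) := hT (Set.mem_univ k)
    obtain ⟨k₀, hk₀T, hk₀⟩ := Set.mem_iUnion₂.1 hk
    exact hprop (f k₀) t (le_trans ht (Finset.min'_le _ _
      (Finset.mem_insert_of_mem (Finset.mem_image_of_mem _ hk₀T)))) (f k) hk₀

/-- The main correction construction: given a scaling factor and a cut-off function,
produce a map into `A` homotopic to `f` rel `L`. -/
theorem corr (act : ℂˣ → X → X)
    (hcont : Continuous fun p : ℂˣ × X => act p.1 p.2)
    (hone : ∀ x, act 1 x = x)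
    (A W : Set X) (hAinv : ∀ t, ∀ a ∈ A, act t a ∈ A)
    (H : C((↥W) × unitInterval, ↥W))
    (hH0 : ∀ w, H (w, 0) = w) (hH1 : ∀ w, (H (w, 1) : X) ∈ A)
    (hHA : ∀ (w : ↥W) (t : unitInterval), (w : X) ∈ A → H (w, t) = w)
    {K : Type*} [TopologicalSpace K] [CompactSpace K]
    (f : C(K, X)) (L : Set K) (hfL : ∀ k ∈ L, f k ∈ A)
    (s : ℝ) (hs0 : 0 < s) (hs1 : s ≤ 1)
    (ρ : C(K, ℝ)) (hρ : ∀ k, ρ k ∈ Icc (0:ℝ) 1) (hρL : ∀ k ∈ L, ρ k = 0)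
    (hkey : ∀ k (h : 0 < 1 + ρ k * (s - 1)), act (ru (1 + ρ k * (s - 1)) h) (f k) ∈ W) :
    ∃ g : C(K, X), (∀ k, g k ∈ A) ∧ (∀ k ∈ L, g k = f k) ∧ f.HomotopicRel g L := by
  have hcpos : ∀ u : ℝ, 0 ≤ u → u ≤ 1 → 0 < 1 + u * (s - 1) := by
    intro u h0 h1; nlinarith
  have hb : ∀ p : I × K, 0 ≤ (p.1 : ℝ) * ρ p.2 ∧ (p.1 : ℝ) * ρ p.2 ≤ 1 := fun p =>
    ⟨mul_nonneg p.1.2.1 (hρ p.2).1, by nlinarith [p.1.2.1, p.1.2.2, (hρ p.2).1, (hρ p.2).2]⟩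
  have hgWc : Continuous fun k =>
      act (ru (1 + ρ k * (s - 1)) (hcpos _ (hρ k).1 (hρ k).2)) (f k) :=
    hcont.comp ((continuous_ru (continuous_const.add (ρ.continuous.mul continuous_const))
      (fun k => hcpos _ (hρ k).1 (hρ k).2)).prodMk f.continuous)
  let gW : C(K, ↥W) :=
    ⟨fun k => ⟨act (ru (1 + ρ k * (s - 1)) (hcpos _ (hρ k).1 (hρ k).2)) (f k), hkey k _⟩,
      hgWc.subtype_mk _⟩
  let fW : C(K, X) := ⟨fun k => (gW k : X), continuous_subtype_val.comp gW.continuous⟩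
  let g : C(K, X) := ⟨fun k => (H (gW k, 1) : X),
      continuous_subtype_val.comp (H.continuous.comp (gW.continuous.prodMk continuous_const))⟩
  have F1 : f.HomotopyRel fW L :=
    { toFun := fun p => act (ru (1 + (p.1 : ℝ) * ρ p.2 * (s - 1))
        (hcpos _ (hb p).1 (hb p).2)) (f p.2)
      continuous_toFun := hcont.comp ((continuous_ru
        (continuous_const.add (((continuous_subtype_val.comp continuous_fst).mul
          (ρ.continuous.comp continuous_snd)).mul continuous_const))
        (fun p => hcpos _ (hb p).1 (hb p).2)).prodMk
        (f.continuous.comp continuous_snd))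
      map_zero_left := fun k => act_ru_eq_self act hone _ (by norm_num) (f k)
      map_one_left := fun k =>
        act_ru_congr act _ (hcpos _ (hρ k).1 (hρ k).2) (by norm_num) (f k)
      prop' := fun t k hk =>
        act_ru_eq_self act hone _ (by rw [hρL k hk]; ring) (f k) }
  have F2 : fW.HomotopyRel g L :=
    { toFun := fun p => (H (gW p.2, p.1) : X)
      continuous_toFun := continuous_subtype_val.comp (H.continuous.comp
        ((gW.continuous.comp continuous_snd).prodMk continuous_fst))
      map_zero_left := fun k => by show (H (gW k, 0) : X) = fW k; rw [hH0]; rfl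
      map_one_left := fun k => rfl
      prop' := fun t k hk => by
        have hmem : (gW k : X) ∈ A := hAinv _ _ (hfL k hk)
        show (H (gW k, t) : X) = fW k
        rw [hHA _ _ hmem]; rfl }
  exact ⟨g, fun k => hH1 _, fun k hk => ((F1.trans F2).fst_eq_snd hk).symm, ⟨F1.trans F2⟩⟩

/-- Construction of the cut-off function, on a compact normal space. -/
theorem exists_rho (act : ℂˣ → X → X)
    (hcont : Continuous fun p : ℂˣ × X => act p.1 p.2)
    (A W : Set X) (hWopen : IsOpen W) (hAW : A ⊆ W)
    (hAinv : ∀ t, ∀ a ∈ A, act t a ∈ A)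
    {K : Type*} [TopologicalSpace K] [CompactSpace K] [NormalSpace K]
    (f : C(K, X)) (L : Set K) (hL : IsClosed L) (hfL : ∀ k ∈ L, f k ∈ A)
    (s : ℝ) (hs0 : 0 < s) (hs1 : s ≤ 1)
    (hsW : ∀ t : ℂˣ, ‖(t : ℂ)‖ ≤ s → ∀ k, act t (f k) ∈ W) :
    ∃ ρ : C(K, ℝ), (∀ k, ρ k ∈ Icc (0:ℝ) 1) ∧ (∀ k ∈ L, ρ k = 0) ∧
      ∀ k (h : 0 < 1 + ρ k * (s - 1)), act (ru (1 + ρ k * (s - 1)) h) (f k) ∈ W := by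
  have hcpos : ∀ u : ℝ, 0 ≤ u → u ≤ 1 → 0 < 1 + u * (s - 1) := by
    intro u h0 h1; nlinarith
  set Ψ : I × K → X := fun p =>
    act (ru (1 + (p.1 : ℝ) * (s - 1)) (hcpos _ p.1.2.1 p.1.2.2)) (f p.2) with hΨdef
  have hΨ : Continuous Ψ := hcont.comp ((continuous_ru
      (continuous_const.add ((continuous_subtype_val.comp continuous_fst).mul
        continuous_const)) (fun p : I × K => hcpos _ p.1.2.1 p.1.2.2)).prodMk
      (f.continuous.comp continuous_snd))
  have hBadcl : IsClosed (Prod.snd '' (Ψ ⁻¹' Wᶜ)) :=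
    isClosedMap_snd_of_compactSpace _ (hWopen.isClosed_compl.preimage hΨ)
  have hdisj : Disjoint L (Prod.snd '' (Ψ ⁻¹' Wᶜ)) := by
    rw [Set.disjoint_left]
    rintro k hkL ⟨⟨u, k'⟩, hmem, rfl⟩
    exact hmem (hAW (hAinv _ _ (hfL _ hkL)))
  obtain ⟨ρ, hρ0, hρ1, hρmem⟩ := exists_continuous_zero_one_of_isClosed hL hBadcl hdisj
  refine ⟨ρ, hρmem, fun k hk => hρ0 hk, ?_⟩
  intro k h
  by_cases hkB : k ∈ Prod.snd '' (Ψ ⁻¹' Wᶜ)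
  · have h1 : ρ k = 1 := hρ1 hkB
    have hnorm : ‖((ru (1 + ρ k * (s - 1)) h : ℂˣ) : ℂ)‖ ≤ s := by
      rw [norm_ru, h1]; linarith
    exact hsW _ hnorm k
  · have hall : ∀ u : I, Ψ (u, k) ∈ W := by
      intro u
      by_contra hu
      exact hkB ⟨(u, k), hu, rfl⟩
    exact hall ⟨ρ k, hρmem k⟩


/-- Surjectivity of `[K,A] → [K,X]` for compact `K`. -/
theorem free_surj (act : ℂˣ → X → X)
    (hcont : Continuous fun p : ℂˣ × X => act p.1 p.2)
    (hone : ∀ x, act 1 x = x)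
    (A W : Set X) (hAinv : ∀ t, ∀ a ∈ A, act t a ∈ A)
    (hWopen : IsOpen W) (hAW : A ⊆ W)
    (H : C((↥W) × unitInterval, ↥W))
    (hH0 : ∀ w, H (w, 0) = w) (hH1 : ∀ w, (H (w, 1) : X) ∈ A)
    (hHA : ∀ (w : ↥W) (t : unitInterval), (w : X) ∈ A → H (w, t) = w)
    (hattr : ∀ W' ∈ nhdsSet A, ∀ x : X, ∃ U ∈ nhds x, ∃ s > (0 : ℝ),
      ∀ t : ℂˣ, ‖(t : ℂ)‖ ≤ s → ∀ u ∈ U, act t u ∈ W')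
    {K : Type*} [TopologicalSpace K] [CompactSpace K] (f : C(K, X)) :
    ∃ g : C(K, ↥A),
      ((⟨Subtype.val, continuous_subtype_val⟩ : C(↥A, X)).comp g).Homotopic f := by
  obtain ⟨s, hs0, hs1, hsW⟩ := exists_scale act A W hWopen hAW hattr f
  obtain ⟨g, hgA, -, hrel⟩ := corr act hcont hone A W hAinv H hH0 hH1 hHA f ∅
    (fun k hk => absurd hk (Set.notMem_empty k)) s hs0 hs1
    (ContinuousMap.const K 1) (fun k => by norm_num)
    (fun k hk => absurd hk (Set.notMem_empty k))
    (fun k h => hsW _ (by rw [norm_ru]; show (1:ℝ) + 1 * (s-1) ≤ s; linarith) k)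
  refine ⟨⟨fun k => ⟨g k, hgA k⟩, g.continuous.subtype_mk _⟩, ?_⟩
  have hco : (⟨Subtype.val, continuous_subtype_val⟩ : C(↥A, X)).comp
      (⟨fun k => ⟨g k, hgA k⟩, g.continuous.subtype_mk _⟩ : C(K, ↥A)) = g :=
    ContinuousMap.ext fun k => rfl
  rw [hco]
  exact hrel.homotopic.symm

/-- Injectivity of `[K,A] → [K,X]` for compact `K`. -/
theorem free_inj (act : ℂˣ → X → X)
    (hcont : Continuous fun p : ℂˣ × X => act p.1 p.2)
    (hone : ∀ x, act 1 x = x)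
    (A W : Set X) (hAinv : ∀ t, ∀ a ∈ A, act t a ∈ A)
    (hWopen : IsOpen W) (hAW : A ⊆ W)
    (H : C((↥W) × unitInterval, ↥W))
    (hH0 : ∀ w, H (w, 0) = w) (hH1 : ∀ w, (H (w, 1) : X) ∈ A)
    (hHA : ∀ (w : ↥W) (t : unitInterval), (w : X) ∈ A → H (w, t) = w)
    (hattr : ∀ W' ∈ nhdsSet A, ∀ x : X, ∃ U ∈ nhds x, ∃ s > (0 : ℝ),
      ∀ t : ℂˣ, ‖(t : ℂ)‖ ≤ s → ∀ u ∈ U, act t u ∈ W')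
    {K : Type*} [TopologicalSpace K] [CompactSpace K] (g₁ g₂ : C(K, ↥A))
    (hh : ((⟨Subtype.val, continuous_subtype_val⟩ : C(↥A, X)).comp g₁).Homotopic
          ((⟨Subtype.val, continuous_subtype_val⟩ : C(↥A, X)).comp g₂)) :
    g₁.Homotopic g₂ := by
  obtain ⟨F⟩ := hh
  obtain ⟨s, hs0, hs1, hsW⟩ := exists_scale act A W hWopen hAW hattr F.toContinuousMap
  have husn : ‖((ru s hs0 : ℂˣ) : ℂ)‖ ≤ s := le_of_eq (norm_ru s hs0)
  have hcpos : ∀ u : ℝ, 0 ≤ u → u ≤ 1 → 0 < 1 + u * (s - 1) := by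
    intro u h0 h1; nlinarith
  have scaleHom : ∀ g : C(K, ↥A), ∃ qg : C(K, ↥A),
      (∀ k, (qg k : X) = act (ru s hs0) (g k : X)) ∧ g.Homotopic qg := by
    intro g
    refine ⟨⟨fun k => ⟨act (ru s hs0) (g k : X), hAinv _ _ (g k).2⟩,
      (hcont.comp (continuous_const.prodMk
        (continuous_subtype_val.comp g.continuous))).subtype_mk _⟩, fun k => rfl, ?_⟩
    refine ⟨{ toFun := fun p => ⟨act (ru (1 + (p.1 : ℝ) * (s - 1)) (hcpos _ p.1.2.1 p.1.2.2))
                ((g p.2 : X)), hAinv _ _ (g p.2).2⟩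
              continuous_toFun := (hcont.comp ((continuous_ru
                (continuous_const.add ((continuous_subtype_val.comp continuous_fst).mul
                  continuous_const)) (fun p => hcpos _ p.1.2.1 p.1.2.2)).prodMk
                (continuous_subtype_val.comp (g.continuous.comp continuous_snd)))).subtype_mk _
              map_zero_left := fun k => Subtype.ext
                (act_ru_eq_self act hone _ (by norm_num) _)
              map_one_left := fun k => Subtype.ext
                (act_ru_congr act _ hs0 (by norm_num) _) }⟩
  obtain ⟨q₁, hq₁, hg₁⟩ := scaleHom g₁
  obtain ⟨q₂, hq₂, hg₂⟩ := scaleHom g₂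
  have mid : q₁.Homotopic q₂ := by
    refine ⟨{ toFun := fun p => ⟨(H (⟨act (ru s hs0) (F p), hsW _ husn p⟩, 1) : X), hH1 _⟩
              continuous_toFun := (continuous_subtype_val.comp (H.continuous.comp
                (((hcont.comp (continuous_const.prodMk F.continuous)).subtype_mk _).prodMk
                  continuous_const))).subtype_mk _
              map_zero_left := fun k => Subtype.ext ?_
              map_one_left := fun k => Subtype.ext ?_ }⟩
    · have h0 : F (0, k) = ((⟨Subtype.val, continuous_subtype_val⟩ : C(↥A, X)).comp g₁) k :=
        F.apply_zero k
      have hmem : act (ru s hs0) (F (0, k)) ∈ A := by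
        rw [h0]; exact hAinv _ _ (g₁ k).2
      show (H (⟨act (ru s hs0) (F (0, k)), _⟩, 1) : X) = (q₁ k : X)
      rw [hHA _ 1 hmem, hq₁ k]
      show act (ru s hs0) (F (0, k)) = act (ru s hs0) (g₁ k : X)
      rw [h0]; rfl
    · have h1 : F (1, k) = ((⟨Subtype.val, continuous_subtype_val⟩ : C(↥A, X)).comp g₂) k :=
        F.apply_one k
      have hmem : act (ru s hs0) (F (1, k)) ∈ A := by
        rw [h1]; exact hAinv _ _ (g₂ k).2
      show (H (⟨act (ru s hs0) (F (1, k)), _⟩, 1) : X) = (q₂ k : X)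
      rw [hHA _ 1 hmem, hq₂ k]
      show act (ru s hs0) (F (1, k)) = act (ru s hs0) (g₂ k : X)
      rw [h1]; rfl
  exact (hg₁.trans mid).trans hg₂.symm

end SAIWE

/-- Let `ℂ×` act continuously on `X`, let `A` be a closed invariant subspace which is
strongly attractive at zero and possesses an open neighborhood `W` deformation retracting
onto it.  Then for every compact space `K` the inclusion induces a bijection
`[K, A] → [K, X]`; in particular the inclusion `A → X` is a weak homotopy equivalence. -/
theorem strongly_attractive_inclusion_weak_equivalence
    {X : Type*} [TopologicalSpace X]
    (act : ℂˣ → X → X)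
    (hcont : Continuous fun p : ℂˣ × X => act p.1 p.2)
    (hone : ∀ x, act 1 x = x)
    (hmul : ∀ s t x, act (s * t) x = act s (act t x))
    (A : Set X) (hAcl : IsClosed A) (hAinv : ∀ t, ∀ a ∈ A, act t a ∈ A)
    (W : Set X) (hWopen : IsOpen W) (hAW : A ⊆ W)
    -- `W` deformation retracts onto `A`
    (hretr : ∃ H : C((↥W) × unitInterval, ↥W),
      (∀ w, H (w, 0) = w) ∧ (∀ w, (H (w, 1) : X) ∈ A) ∧
      (∀ (w : ↥W) (t : unitInterval), (w : X) ∈ A → H (w, t) = w))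
    -- `A` is strongly attractive at zero
    (hattr : ∀ W' ∈ nhdsSet A, ∀ x : X, ∃ U ∈ nhds x, ∃ s > (0 : ℝ),
      ∀ t : ℂˣ, ‖(t : ℂ)‖ ≤ s → ∀ u ∈ U, act t u ∈ W') :
    (∀ (K : Type) [TopologicalSpace K] [CompactSpace K],
      (∀ f : C(K, X), ∃ g : C(K, ↥A),
        ((⟨Subtype.val, continuous_subtype_val⟩ : C(↥A, X)).comp g).Homotopic f) ∧
      (∀ g₁ g₂ : C(K, ↥A),
        ((⟨Subtype.val, continuous_subtype_val⟩ : C(↥A, X)).comp g₁).Homotopic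
          ((⟨Subtype.val, continuous_subtype_val⟩ : C(↥A, X)).comp g₂) →
        g₁.Homotopic g₂)) ∧
    Function.Bijective
      (inducedZerothHomotopyMap (⟨Subtype.val, continuous_subtype_val⟩ : C(↥A, X))) ∧
    ∀ (n : ℕ) (a : ↥A), Function.Bijective
      (inducedHomotopyGroupMap (Fin n) (⟨Subtype.val, continuous_subtype_val⟩ : C(↥A, X)) a) := by
  obtain ⟨H, hH0, hH1, hHA⟩ := hretr
  refine ⟨fun K _ _ =>
    ⟨fun f => SAIWE.free_surj act hcont hone A W hAinv hWopen hAW H hH0 hH1 hHA hattr f,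
     fun g₁ g₂ hh =>
       SAIWE.free_inj act hcont hone A W hAinv hWopen hAW H hH0 hH1 hHA hattr g₁ g₂ hh⟩,
    ⟨?_, ?_⟩, ?_⟩
  · -- π₀ injective
    intro q₁ q₂
    refine Quotient.inductionOn₂ q₁ q₂ ?_
    intro a b hq
    have hx : Quotient.mk (pathSetoid X) ((a : ↥A) : X) = Quotient.mk (pathSetoid X) (b : X) := hq
    have hj : Joined ((a : ↥A) : X) (b : X) := Quotient.exact hx
    obtain ⟨p⟩ := hj
    have hcc : ((⟨Subtype.val, continuous_subtype_val⟩ : C(↥A, X)).comp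
          (ContinuousMap.const PUnit.{1} a)).Homotopic
        ((⟨Subtype.val, continuous_subtype_val⟩ : C(↥A, X)).comp (ContinuousMap.const PUnit.{1} b)) :=
      ⟨{ toFun := fun q => p q.1
         continuous_toFun := p.continuous.comp continuous_fst
         map_zero_left := fun u => p.source
         map_one_left := fun u => p.target }⟩
    obtain ⟨Hm⟩ := SAIWE.free_inj act hcont hone A W hAinv hWopen hAW H hH0 hH1 hHA hattr
      (ContinuousMap.const PUnit.{1} a) (ContinuousMap.const PUnit.{1} b) hcc
    exact Quotient.sound ⟨⟨⟨fun t => Hm (t, PUnit.unit),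
      Hm.continuous.comp (continuous_id.prodMk continuous_const)⟩,
      Hm.apply_zero _, Hm.apply_one _⟩⟩
  · -- π₀ surjective
    intro q
    obtain ⟨x, rfl⟩ := Quotient.exists_rep q
    obtain ⟨g, ⟨Hm⟩⟩ := SAIWE.free_surj act hcont hone A W hAinv hWopen hAW H hH0 hH1 hHA hattr
      (ContinuousMap.const PUnit.{1} x)
    refine ⟨Quotient.mk (pathSetoid ↥A) (g PUnit.unit), ?_⟩
    exact Quotient.sound ⟨⟨⟨fun t => Hm (t, PUnit.unit),
      Hm.continuous.comp (continuous_id.prodMk continuous_const)⟩,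
      Hm.apply_zero _, Hm.apply_one _⟩⟩
  · -- homotopy groups
    intro n a
    constructor
    · -- injective
      intro q₁ q₂
      refine Quotient.inductionOn₂ q₁ q₂ ?_
      intro g₁ g₂ hq
      have hq' : Quotient.mk _
            (inducedGenLoop (Fin n) (⟨Subtype.val, continuous_subtype_val⟩ : C(↥A, X)) a g₁) =
          Quotient.mk _
            (inducedGenLoop (Fin n) (⟨Subtype.val, continuous_subtype_val⟩ : C(↥A, X)) a g₂) := hq
      have hFr : ContinuousMap.HomotopicRel
          ((⟨Subtype.val, continuous_subtype_val⟩ : C(↥A, X)).comp g₁.1)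
          ((⟨Subtype.val, continuous_subtype_val⟩ : C(↥A, X)).comp g₂.1)
          (Cube.boundary (Fin n)) := Quotient.exact hq'
      obtain ⟨F⟩ := hFr
      set L' : Set (unitInterval × (Fin n → unitInterval)) :=
        (Prod.snd ⁻¹' Cube.boundary (Fin n)) ∪
          (Prod.fst ⁻¹' ({0, 1} : Set unitInterval)) with hL'def
      have hL' : IsClosed L' :=
        ((SAIWE.boundary_closed n).preimage continuous_snd).union
          ((Set.Finite.isClosed (Set.toFinite _)).preimage continuous_fst)
      have hfL' : ∀ p ∈ L', F.toContinuousMap p ∈ A := by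
        rintro ⟨t, y⟩ (hy | ht)
        · show F (t, y) ∈ A
          rw [F.eq_fst t hy]
          exact (g₁.1 y).2
        · rcases ht with h0 | h1
          · cases h0
            show F (0, y) ∈ A
            rw [F.apply_zero]
            exact (g₁.1 y).2
          · cases h1
            show F (1, y) ∈ A
            rw [F.apply_one]
            exact (g₂.1 y).2
      obtain ⟨s, hs0, hs1, hsW⟩ :=
        SAIWE.exists_scale act A W hWopen hAW hattr F.toContinuousMap
      obtain ⟨ρ, hρmem, hρL, hρkey⟩ := SAIWE.exists_rho act hcont A W hWopen hAW hAinv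
        F.toContinuousMap L' hL' hfL' s hs0 hs1 hsW
      obtain ⟨G, hGA, hGL, -⟩ := SAIWE.corr act hcont hone A W hAinv H hH0 hH1 hHA
        F.toContinuousMap L' hfL' s hs0 hs1 ρ hρmem hρL hρkey
      refine Quotient.sound ⟨{
        toFun := fun p => (⟨G p, hGA p⟩ : ↥A)
        continuous_toFun := G.continuous.subtype_mk _
        map_zero_left := fun y => Subtype.ext (by
          show G (0, y) = ((g₁.1 y : ↥A) : X)
          rw [hGL (0, y) (Or.inr (Set.mem_insert _ _))]
          exact F.apply_zero y)
        map_one_left := fun y => Subtype.ext (by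
          show G (1, y) = ((g₂.1 y : ↥A) : X)
          rw [hGL (1, y) (Or.inr (Set.mem_insert_of_mem _ rfl))]
          exact F.apply_one y)
        prop' := fun t y hy => Subtype.ext (by
          show G (t, y) = ((g₁.1 y : ↥A) : X)
          rw [hGL (t, y) (Or.inl hy)]
          exact F.eq_fst t hy) }⟩
    · -- surjective
      intro q
      obtain ⟨γ, rfl⟩ := Quotient.exists_rep q
      have hγL : ∀ y ∈ Cube.boundary (Fin n), γ.1 y ∈ A := fun y hy => by
        rw [γ.2 y hy]; exact a.2
      obtain ⟨s, hs0, hs1, hsW⟩ := SAIWE.exists_scale act A W hWopen hAW hattr γ.1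
      obtain ⟨ρ, hρmem, hρL, hρkey⟩ := SAIWE.exists_rho act hcont A W hWopen hAW hAinv
        γ.1 (Cube.boundary (Fin n)) (SAIWE.boundary_closed n) hγL s hs0 hs1 hsW
      obtain ⟨g, hgA, hgL, hrel⟩ := SAIWE.corr act hcont hone A W hAinv H hH0 hH1 hHA
        γ.1 (Cube.boundary (Fin n)) hγL s hs0 hs1 ρ hρmem hρL hρkey
      obtain ⟨F⟩ := hrel
      refine ⟨Quotient.mk _ ((⟨⟨fun y => ⟨g y, hgA y⟩, g.continuous.subtype_mk _⟩,
        fun y hy => Subtype.ext (by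
          show g y = ((a : ↥A) : X)
          rw [hgL y hy]
          exact γ.2 y hy)⟩ : GenLoop (Fin n) ↥A a)), ?_⟩
      exact Quotient.sound ⟨F.symm⟩
end

section
/- Consider the ℂ×-action on the complex projective line ℙ¹(ℂ) given by t · [x : y] = [t x : t⁻¹ y], and let A = {[1:0], [0:1]} be the set of fixed points. Then A is weakly attractive at zero (for every neighborhood W of A and every point x ∈ ℙ¹ there is s > 0 with t·x ∈ W for all 0 < |t| ≤ s), but A is not strongly attractive at zero (there exist a neighborhood W of A and a point x such that no neighborhood U of x satisfies t·U ⊆ W for all sufficiently small |t|). -/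
open Projectivization

noncomputable instance : TopologicalSpace (Projectivization ℂ (Fin 2 → ℂ)) :=
  inferInstanceAs (TopologicalSpace (Quotient (projectivizationSetoid ℂ (Fin 2 → ℂ))))

/-- The diagonal linear map `(x, y) ↦ (t x, t⁻¹ y)` on `ℂ²`. -/
noncomputable def dMap (t : ℂˣ) : (Fin 2 → ℂ) →ₗ[ℂ] (Fin 2 → ℂ) where
  toFun v := fun i => (![(t : ℂ), ((t⁻¹ : ℂˣ) : ℂ)] i) * v i
  map_add' u v := by funext i; simp [mul_add]
  map_smul' a v := by funext i; simp [smul_eq_mul]; ring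

theorem dMap_injective (t : ℂˣ) : Function.Injective (dMap t) := by
  intro u v h
  funext i
  have hc : (![(t : ℂ), ((t⁻¹ : ℂˣ) : ℂ)] i) ≠ 0 := by
    fin_cases i <;> simp
  have := congrFun h i
  exact mul_left_cancel₀ hc this

/-- The `ℂ×`-action `t · [x : y] = [t x : t⁻¹ y]` on `ℙ¹(ℂ)`. -/
noncomputable def pAct (t : ℂˣ) : Projectivization ℂ (Fin 2 → ℂ) → Projectivization ℂ (Fin 2 → ℂ) :=
  Projectivization.map (dMap t) (dMap_injective t)

/-- The fixed point `[1 : 0]`. -/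
noncomputable def pt10 : Projectivization ℂ (Fin 2 → ℂ) :=
  Projectivization.mk ℂ ![1, 0] (by intro h; have := congrFun h 0; simp at this)

/-- The fixed point `[0 : 1]`. -/
noncomputable def pt01 : Projectivization ℂ (Fin 2 → ℂ) :=
  Projectivization.mk ℂ ![0, 1] (by intro h; have := congrFun h 1; simp at this)

/-! In the affine coordinate `[a : b] ↦ a / b` the action of `t` is multiplication by `t²`.
Hence every orbit other than the fixed point `[1 : 0]` extends continuously to `t = 0` with
value `[0 : 1]`, which gives weak attractiveness. Strong attractiveness fails at `x = [1 : 0]`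
for `W = ℙ¹ \ {[1 : 1]}`: the points `[1 : t²]`, arbitrarily close to `[1 : 0]`, are sent by `t`
to `[1 : 1]`. `W` is open because `ℙ¹` is `T1`, as `[v] = [w]` iff `v₀ w₁ = v₁ w₀`. -/

open scoped LinearAlgebra.Projectivization
open Filter Topology

theorem Projectivization.mk_eq_mk_iff_mul_eq_mul {K : Type*} [Field K] {v w : Fin 2 → K}
    (hv : v ≠ 0) (hw : w ≠ 0) : mk K v hv = mk K w hw ↔ v 0 * w 1 = v 1 * w 0 := by
  rw [mk_eq_mk_iff']
  constructor
  · rintro ⟨a, rfl⟩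
    simp only [Pi.smul_apply, smul_eq_mul]
    ring
  · intro h
    by_cases hw0 : w 0 = 0
    · have hw1 : w 1 ≠ 0 := fun hw1 => hw (funext fun i => by fin_cases i <;> assumption)
      have hv0 : v 0 = 0 := by simpa [hw0, hw1] using h
      refine ⟨v 1 / w 1, funext fun i => ?_⟩
      fin_cases i <;> simp [hv0, hw0, hw1]
    · refine ⟨v 0 / w 0, funext fun i => ?_⟩
      fin_cases i
      · simp [hw0]
      · simp only [Fin.mk_one, Pi.smul_apply, smul_eq_mul]
        field_simp
        linear_combination h

theorem pAct_mk_eq_mk_iff (t : ℂˣ) {v w : Fin 2 → ℂ} (hv : v ≠ 0) (hw : w ≠ 0) :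
    pAct t (mk ℂ v hv) = mk ℂ w hw ↔ (t : ℂ) ^ 2 * v 0 * w 1 = v 1 * w 0 := by
  rw [pAct, map_mk, mk_eq_mk_iff_mul_eq_mul]
  simp only [dMap, LinearMap.coe_mk, AddHom.coe_mk, Matrix.cons_val_zero, Matrix.cons_val_one,
    Units.val_inv_eq_inv_val]
  have ht := t.ne_zero
  constructor <;> intro h
  · field_simp at h
    linear_combination h
  · field_simp
    linear_combination h

theorem Continuous.projectivization_mk {X : Type*} [TopologicalSpace X] {f : X → Fin 2 → ℂ}
    (hf : Continuous f) (hf0 : ∀ x, f x ≠ 0) :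
    Continuous fun x => Projectivization.mk ℂ (f x) (hf0 x) :=
  continuous_quotient_mk'.comp (hf.subtype_mk hf0)

instance : T1Space (ℙ ℂ (Fin 2 → ℂ)) := by
  refine ⟨ind fun w hw => isQuotientMap_quotient_mk'.isClosed_preimage.1 ?_⟩
  change IsClosed {v : {v : Fin 2 → ℂ // v ≠ 0} | mk ℂ v.1 v.2 = mk ℂ w hw}
  simp_rw [mk_eq_mk_iff_mul_eq_mul]
  exact isClosed_eq ((continuous_apply 0).mul continuous_const |>.comp continuous_subtype_val)
    ((continuous_apply 1).mul continuous_const |>.comp continuous_subtype_val)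

noncomputable def pt11 : ℙ ℂ (Fin 2 → ℂ) :=
  mk ℂ ![1, 1] (by simp)

theorem exists_continuous_extension_of_orbit (x : ℙ ℂ (Fin 2 → ℂ)) :
    ∃ γ : ℂ → ℙ ℂ (Fin 2 → ℂ), Continuous γ ∧ γ 0 ∈ ({pt10, pt01} : Set (ℙ ℂ (Fin 2 → ℂ))) ∧
      ∀ t : ℂˣ, pAct t x = γ t := by
  induction x using ind with | h v hv => ?_
  by_cases hv1 : v 1 = 0
  · refine ⟨fun _ => pt10, continuous_const, by simp, fun t => ?_⟩
    rw [pt10, pAct_mk_eq_mk_iff]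
    simp [hv1]
  · have hγ : ∀ c : ℂ, ![c ^ 2 * v 0, v 1] ≠ 0 := by simp [hv1]
    have hγ0 : mk ℂ _ (hγ 0) = pt01 := by
      rw [pt01, mk_eq_mk_iff_mul_eq_mul]
      simp
    refine ⟨fun c => mk ℂ _ (hγ c), Continuous.projectivization_mk (by fun_prop) hγ,
      Or.inr hγ0, fun t => ?_⟩
    rw [pAct_mk_eq_mk_iff]
    simp only [Matrix.cons_val_zero, Matrix.cons_val_one]
    ring

theorem pt11_notMem : pt11 ∉ ({pt10, pt01} : Set (ℙ ℂ (Fin 2 → ℂ))) := by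
  simp only [Set.mem_insert_iff, Set.mem_singleton_iff, pt11, pt10, pt01,
    mk_eq_mk_iff_mul_eq_mul]
  norm_num

theorem exists_continuous_pAct_eq_pt11 :
    ∃ σ : ℂ → ℙ ℂ (Fin 2 → ℂ), Continuous σ ∧ σ 0 = pt10 ∧ ∀ t : ℂˣ, pAct t (σ t) = pt11 := by
  have hσ : ∀ c : ℂ, ![1, c ^ 2] ≠ 0 := by simp
  refine ⟨fun c => mk ℂ _ (hσ c), Continuous.projectivization_mk (by fun_prop) hσ, ?_,
    fun t => ?_⟩
  · rw [pt10, mk_eq_mk_iff_mul_eq_mul]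
    simp
  · rw [pt11, pAct_mk_eq_mk_iff]
    simp

/-- For the `ℂ×`-action `t·[x:y] = [tx : t⁻¹y]` on `ℙ¹(ℂ)`, the fixed point set
`A = {[1:0], [0:1]}` is weakly attractive at zero but not strongly attractive at zero. -/
theorem p1_fixed_points_weakly_not_strongly_attractive :
    -- weakly attractive at zero
    (∀ W ∈ nhdsSet ({pt10, pt01} : Set (Projectivization ℂ (Fin 2 → ℂ))),
      ∀ x : Projectivization ℂ (Fin 2 → ℂ), ∃ s > (0 : ℝ), ∀ t : ℂˣ,
        0 < ‖(t : ℂ)‖ → ‖(t : ℂ)‖ ≤ s → pAct t x ∈ W) ∧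
    -- but not strongly attractive at zero
    ¬ (∀ W ∈ nhdsSet ({pt10, pt01} : Set (Projectivization ℂ (Fin 2 → ℂ))),
      ∀ x : Projectivization ℂ (Fin 2 → ℂ), ∃ U ∈ nhds x, ∃ s > (0 : ℝ), ∀ t : ℂˣ,
        0 < ‖(t : ℂ)‖ → ‖(t : ℂ)‖ ≤ s → ∀ u ∈ U, pAct t u ∈ W) := by
  refine ⟨fun W hW x => ?_, fun H => ?_⟩
  · obtain ⟨γ, hγ, hγ0, horbit⟩ := exists_continuous_extension_of_orbit x
    have hW' : γ ⁻¹' W ∈ 𝓝 0 :=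
      hγ.continuousAt.preimage_mem_nhds (mem_nhdsSet_iff_forall.1 hW _ hγ0)
    obtain ⟨s, hs, hsW⟩ := Metric.nhds_basis_closedBall.mem_iff.1 hW'
    exact ⟨s, hs, fun t _ hts => horbit t ▸ hsW (mem_closedBall_zero_iff.2 hts)⟩
  · have hW : {pt11}ᶜ ∈ 𝓝ˢ ({pt10, pt01} : Set (ℙ ℂ (Fin 2 → ℂ))) :=
      isOpen_compl_singleton.mem_nhdsSet.2 (Set.subset_compl_singleton_iff.2 pt11_notMem)
    obtain ⟨U, hU, s, hs, hUW⟩ := H _ hW pt10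
    obtain ⟨σ, hσ, hσ0, hσt⟩ := exists_continuous_pAct_eq_pt11
    have hσU : σ ⁻¹' U ∩ Metric.closedBall 0 s ∈ 𝓝 0 :=
      inter_mem (hσ.continuousAt.preimage_mem_nhds (hσ0 ▸ hU)) (Metric.closedBall_mem_nhds 0 hs)
    obtain ⟨c, ⟨hcU, hcs⟩, hc0 : c ≠ 0⟩ := nonempty_of_mem
      (inter_mem (mem_nhdsWithin_of_mem_nhds hσU) self_mem_nhdsWithin : _ ∈ 𝓝[≠] (0 : ℂ))
    exact hUW (Units.mk0 c hc0) (norm_pos_iff.2 hc0) (mem_closedBall_zero_iff.1 hcs) _ hcU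
      (hσt (Units.mk0 c hc0))
end
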